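/- arXiv:2603.19343 — 4 statements merged into one kernel-verified Lean document; each statement's English description precedes it below -/
import Mathlib

section
/- For all integers m ≥ 1 and n ≥ 1, F_{n*m} = F_n * ∑_{i=0}^{⌊(m-1)/2⌋} C(m-1-i, i) * L_n^(m-1-2i) * (-1)^(i*(n+1)), where F denotes Fibonacci numbers, L Lucas numbers, and C binomial coefficients (Vorobtsov's identity). -/
open Finset

private def fterm (x ε : ℤ) (j i : ℕ) : ℤ :=
  (Nat.choose (j - i) i : ℤ) * x ^ (j - 2 * i) * ε ^ i

private lemma fterm_eq_zero (x ε : ℤ) (j i : ℕ) (h : j / 2 + 1 ≤ i) :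
    fterm x ε j i = 0 := by
  have : j - i < i := by omega
  simp [fterm, Nat.choose_eq_zero_of_lt this]

private lemma sum_fterm (x ε : ℤ) (j N : ℕ) (h : j / 2 + 1 ≤ N) :
    ∑ i ∈ range N, fterm x ε j i = ∑ i ∈ range (j / 2 + 1), fterm x ε j i := by
  symm
  apply Finset.sum_subset (Finset.range_subset_range.2 h)
  intro i _ hi
  exact fterm_eq_zero x ε j i (by simp at hi; omega)

private lemma fterm_step (x ε : ℤ) (j i : ℕ) (h : i ≤ j) :
    fterm x ε (j + 2) (i + 1) = ε * fterm x ε j i + x * fterm x ε (j + 1) (i + 1) := by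
  have e1 : j + 2 - (i + 1) = (j - i) + 1 := by omega
  have e2 : j + 2 - 2 * (i + 1) = j - 2 * i := by omega
  have e3 : j + 1 - (i + 1) = j - i := by omega
  rw [fterm, fterm, fterm, e1, e2, e3, Nat.choose_succ_succ']
  by_cases h2 : 2 * i + 1 ≤ j
  · have e4 : j - 2 * i = (j + 1 - 2 * (i + 1)) + 1 := by omega
    push_cast
    rw [e4, pow_succ, pow_succ]
    ring
  · have : j - i < i + 1 := by omega
    rw [Nat.choose_eq_zero_of_lt this]
    have e5 : j + 1 - 2 * (i + 1) = 0 := by omega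
    have e6 : j - 2 * i = 0 := by omega
    rw [e5, e6]
    push_cast
    rw [pow_succ]
    ring

private lemma P_rec (x ε : ℤ) (j : ℕ) :
    ∑ i ∈ range ((j + 2) / 2 + 1), fterm x ε (j + 2) i =
      x * ∑ i ∈ range ((j + 1) / 2 + 1), fterm x ε (j + 1) i +
      ε * ∑ i ∈ range (j / 2 + 1), fterm x ε j i := by
  rw [← sum_fterm x ε (j + 2) (j + 2) (by omega),
      ← sum_fterm x ε (j + 1) (j + 2) (by omega),
      ← sum_fterm x ε j (j + 1) (by omega)]
  rw [Finset.sum_range_succ' (fterm x ε (j + 2)) (j + 1),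
      Finset.sum_range_succ' (fterm x ε (j + 1)) (j + 1)]
  have hsum : ∑ i ∈ range (j + 1), fterm x ε (j + 2) (i + 1) =
      ∑ i ∈ range (j + 1), (ε * fterm x ε j i + x * fterm x ε (j + 1) (i + 1)) := by
    apply Finset.sum_congr rfl
    intro i hi
    exact fterm_step x ε j i (by simp at hi; omega)
  rw [hsum, Finset.sum_add_distrib, ← Finset.mul_sum, ← Finset.mul_sum]
  have h0 : fterm x ε (j + 2) 0 = x * fterm x ε (j + 1) 0 := by
    simp [fterm]; ring
  rw [h0]
  ring

private lemma catalan_id (s : ℕ) : ∀ a : ℕ,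
    (Nat.fib (a + s) : ℤ) * Nat.fib (s + 1) - Nat.fib s * Nat.fib (a + s + 1) =
      (-1) ^ s * Nat.fib a := by
  induction s with
  | zero => intro a; simp
  | succ s ih =>
    intro a
    have h1 : a + (s + 1) = a + s + 1 := by omega
    have h2 : a + s + 1 + 1 = a + s + 2 := by omega
    have h3 : s + 1 + 1 = s + 2 := by omega
    simp only [h1, h2, h3]
    rw [Nat.fib_add_two (n := a + s), Nat.fib_add_two (n := s)]
    push_cast
    have h5 := ih a
    rw [pow_succ]
    linarith

private lemma fib_shift (n a : ℕ) :
    (Nat.fib (a + 2 * (n + 1)) : ℤ) =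
      ((Nat.fib (n + 2) : ℤ) + Nat.fib n) * Nat.fib (a + (n + 1)) + (-1) ^ n * Nat.fib a := by
  have key : Nat.fib ((a + n + 1) + n + 1) =
      Nat.fib (a + n + 1) * Nat.fib n + Nat.fib (a + n + 2) * Nat.fib (n + 1) :=
    Nat.fib_add (a + n + 1) n
  have e1 : a + 2 * (n + 1) = (a + n + 1) + n + 1 := by omega
  have e2 : a + (n + 1) = a + n + 1 := by omega
  rw [e1, e2, key]
  have h3 : (Nat.fib (a + n + 2) : ℤ) = Nat.fib (a + n) + Nat.fib (a + n + 1) := by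
    rw [Nat.fib_add_two]; push_cast; ring
  have h4 : (Nat.fib (n + 2) : ℤ) = Nat.fib n + Nat.fib (n + 1) := by
    rw [Nat.fib_add_two]; push_cast; ring
  have h5 := catalan_id n a
  push_cast
  rw [h3, h4]
  linear_combination h5

theorem stmt_9 (L : ℕ → ℤ) (hL0 : L 0 = 2) (hL1 : L 1 = 1)
    (hLrec : ∀ k : ℕ, 1 ≤ k → L (k + 1) = L k + L (k - 1)) :
    ∀ m n : ℕ, 1 ≤ m → 1 ≤ n →
      (Nat.fib (n * m) : ℤ) =
        (Nat.fib n : ℤ) * ∑ i ∈ Finset.range ((m - 1) / 2 + 1),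
          (Nat.choose (m - 1 - i) i : ℤ) * (L n) ^ (m - 1 - 2 * i) * (-1) ^ (i * (n + 1)) := by
  -- Lucas in terms of Fibonacci
  have hLfib : ∀ k : ℕ, L (k + 1) = (Nat.fib (k + 2) : ℤ) + Nat.fib k := by
    intro k
    induction k using Nat.twoStepInduction with
    | zero => simpa using hL1
    | one =>
      have h := hLrec 1 (by norm_num)
      simp [hL0, hL1] at h
      rw [h]
      have : Nat.fib 3 = 2 := rfl
      simp [this]
    | more k ih1 ih2 =>
      have h := hLrec (k + 2) (by omega)
      have e1 : k + 2 - 1 = k + 1 := by omega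
      rw [e1] at h
      have e2 : k + 1 + 1 = k + 2 := by omega
      rw [e2] at ih2
      rw [h, ih1, ih2]
      have f1 : (Nat.fib (k + 2 + 2) : ℤ) = Nat.fib (k + 2) + Nat.fib (k + 2 + 1) := by
        rw [Nat.fib_add_two]; push_cast; ring
      have f2 : (Nat.fib (k + 1 + 2) : ℤ) = Nat.fib (k + 2 + 1) := by
        rw [show k + 1 + 2 = k + 2 + 1 by omega]
      have f3 : (Nat.fib (k + 2) : ℤ) = Nat.fib k + Nat.fib (k + 1) := by
        rw [Nat.fib_add_two]; push_cast; ring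
      rw [f1, f2, f3]
      ring
  intro m n hm hn
  obtain ⟨t, rfl⟩ : ∃ t, n = t + 1 := ⟨n - 1, by omega⟩
  obtain ⟨m', rfl⟩ : ∃ m', m = m' + 1 := ⟨m - 1, by omega⟩
  set x : ℤ := L (t + 1) with hx
  set ε : ℤ := (-1 : ℤ) ^ t with hε
  -- rewrite the goal sum in terms of fterm
  have hsum : ∀ j : ℕ, ∑ i ∈ Finset.range (j / 2 + 1),
      (Nat.choose (j - i) i : ℤ) * x ^ (j - 2 * i) * (-1) ^ (i * (t + 1 + 1)) =
      ∑ i ∈ Finset.range (j / 2 + 1), fterm x ε j i := by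
    intro j
    apply Finset.sum_congr rfl
    intro i _
    have : ((-1 : ℤ)) ^ (i * (t + 1 + 1)) = ε ^ i := by
      rw [hε, ← pow_mul, mul_comm t i]
      rw [show i * (t + 1 + 1) = i * t + 2 * i by ring, pow_add, pow_mul]
      norm_num
    rw [this, fterm]
  simp only [Nat.add_sub_cancel]
  rw [hsum m']
  -- the key induction
  have hL' : x = (Nat.fib (t + 2) : ℤ) + Nat.fib t := hLfib t
  clear hsum hm hn
  induction m' using Nat.twoStepInduction with
  | zero =>
    simp [fterm, Nat.mul_one]
  | one =>
    have hs := fib_shift t 0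
    simp only [Nat.fib_zero, Nat.cast_zero] at hs
    have e : (t + 1) * 2 = 0 + 2 * (t + 1) := by omega
    rw [e, hs]
    simp only [Nat.zero_add]
    simp [fterm, hL', Finset.sum_range_succ]
    ring
  | more k ih1 ih2 =>
    have e : (t + 1) * (k + 1 + 1 + 1) = (t + 1) * (k + 1) + 2 * (t + 1) := by ring
    have e2 : (t + 1) * (k + 1) + (t + 1) = (t + 1) * (k + 1 + 1) := by ring
    rw [e, fib_shift t ((t + 1) * (k + 1)), e2, ← hL', ih1, ih2, ← hε]
    have := P_rec x ε k
    rw [show k + 1 + 1 = k + 2 from rfl, this]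
    ring
end

section
/- Define P_m(t,d) by P_0 = 0, P_1 = 1, P_{m+1} = t*P_m - d*P_{m-1} in ℤ[t,d] (or in ℤ after specialization). Then for all m, n ≥ 1, F_{n*m} = F_n * P_m(L_n, (-1)^n), where P_m is evaluated at t = L_n, d = (-1)^n. -/
theorem stmt_10 (L : ℕ → ℤ) (hL0 : L 0 = 2) (hL1 : L 1 = 1)
    (hLrec : ∀ k : ℕ, 1 ≤ k → L (k + 1) = L k + L (k - 1))
    (n : ℕ) (hn : 1 ≤ n)
    (P : ℕ → ℤ) (hP0 : P 0 = 0) (hP1 : P 1 = 1)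
    (hPrec : ∀ m : ℕ, 1 ≤ m → P (m + 1) = L n * P m - (-1) ^ n * P (m - 1)) :
    ∀ m : ℕ, 1 ≤ m → (Nat.fib (n * m) : ℤ) = (Nat.fib n : ℤ) * P m := by
  have key : ∀ k a : ℕ, k ≤ a →
      ((Nat.fib (a + k)) : ℤ) + (-1) ^ k * (Nat.fib (a - k) : ℤ)
        = L k * (Nat.fib a : ℤ) := by
    intro k
    induction k using Nat.twoStepInduction with
    | zero =>
      intro a _
      simp [hL0]; ring
    | one =>
      intro a ha
      obtain ⟨b, rfl⟩ : ∃ b, a = b + 1 := ⟨a - 1, by omega⟩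
      have e1 : (Nat.fib (b + 2) : ℤ) = Nat.fib b + Nat.fib (b + 1) := by
        exact_mod_cast congrArg (Nat.cast : ℕ → ℤ) (Nat.fib_add_two (n := b))
      simp only [Nat.add_sub_cancel, hL1]
      push_cast
      linarith [e1]
    | more k ih1 ih2 =>
      intro a ha
      obtain ⟨b, rfl⟩ : ∃ b, a = b + (k + 2) := ⟨a - (k + 2), by omega⟩
      have h1 := ih1 (b + (k + 2)) (by omega)
      have h2 := ih2 (b + (k + 2)) (by omega)
      have hL := hLrec (k + 1) (by omega)
      simp only [Nat.add_sub_cancel] at *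
      have s1 : b + (k + 2) - k = b + 2 := by omega
      have s2 : b + (k + 2) - (k + 1) = b + 1 := by omega
      rw [s1] at h1; rw [s2] at h2
      have e1 : (Nat.fib (b + (k + 2) + (k + 2)) : ℤ)
          = Nat.fib (b + (k + 2) + k) + Nat.fib (b + (k + 2) + (k + 1)) := by
        have := Nat.fib_add_two (n := b + (k + 2) + k)
        have h3 : b + (k + 2) + k + 2 = b + (k + 2) + (k + 2) := by omega
        have h4 : b + (k + 2) + k + 1 = b + (k + 2) + (k + 1) := by omega
        rw [h3, h4] at this
        exact_mod_cast congrArg (Nat.cast : ℕ → ℤ) this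
      have e2 : (Nat.fib (b + 2) : ℤ) = Nat.fib b + Nat.fib (b + 1) := by
        exact_mod_cast congrArg (Nat.cast : ℕ → ℤ) (Nat.fib_add_two (n := b))
      have hs : ((-1 : ℤ)) ^ (k + 2) = (-1) ^ k := by ring
      have hs1 : ((-1 : ℤ)) ^ (k + 1) = -(-1) ^ k := by ring
      rw [hs]
      rw [hs1] at h2
      rw [hL, e1]
      linear_combination h1 + h2 - (-1 : ℤ) ^ k * e2
  have main : ∀ m : ℕ, (Nat.fib (n * m) : ℤ) = (Nat.fib n : ℤ) * P m := by
    intro m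
    induction m using Nat.twoStepInduction with
    | zero => simp [hP0]
    | one => simp [hP1]
    | more m ih1 ih2 =>
      have hk := key n (n * (m + 1)) (Nat.le_mul_of_pos_right n (by omega))
      have hsub : n * (m + 1) - n = n * m := by
        have : n * (m + 1) = n * m + n := by ring
        omega
      have hadd : n * (m + 1) + n = n * (m + 2) := by ring
      rw [hsub, hadd] at hk
      have hp := hPrec (m + 1) (by omega)
      simp only [Nat.add_sub_cancel] at hp
      rw [hp]
      linear_combination hk - (-1 : ℤ) ^ n * ih1 + L n * ih2
  intro m _
  exact main m
end

section
/- For all integers m ≥ 1 and n ≥ 1 with n even, F_{nm} = F_n * U_{m-1}(L_n / 2), where U_{m-1} is the Chebyshev polynomial of the second kind evaluated over ℚ or ℝ. -/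
open goldenRatio Real Polynomial

lemma cheb_aux (x y : ℝ) (hxy : x * y = 1) :
    ∀ m : ℕ, (Polynomial.Chebyshev.U ℝ (m : ℤ)).eval ((x + y) / 2) * (x - y)
      = x ^ (m + 1) - y ^ (m + 1) := by
  intro m
  induction m using Nat.strong_induction_on with
  | _ m ih =>
    match m with
    | 0 => simp
    | 1 => simp [Polynomial.Chebyshev.U_one]; ring
    | (k + 2) =>
      have h1 := ih (k + 1) (by omega)
      have h2 := ih k (by omega)
      have : ((k : ℤ) + 2 : ℤ) = (k : ℤ) + 2 := by push_cast; ring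
      rw [show ((k + 2 : ℕ) : ℤ) = (k : ℤ) + 2 by push_cast; ring,
        Polynomial.Chebyshev.U_add_two]
      push_cast at h1 ⊢
      simp only [Polynomial.eval_sub, Polynomial.eval_mul, Polynomial.eval_ofNat,
        Polynomial.eval_X] at h1 h2 ⊢
      linear_combination (x + y) * h1 - h2 + x ^ (k + 1) * hxy - y ^ (k + 1) * hxy

theorem stmt_12 (L : ℕ → ℤ) (hL0 : L 0 = 2) (hL1 : L 1 = 1)
    (hLrec : ∀ k : ℕ, 1 ≤ k → L (k + 1) = L k + L (k - 1)) :
    ∀ m n : ℕ, 1 ≤ m → 1 ≤ n → Even n →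
      (Nat.fib (n * m) : ℝ) =
        (Nat.fib n : ℝ) * (Polynomial.Chebyshev.U ℝ (m - 1 : ℕ)).eval ((L n : ℝ) / 2) := by
  have hLval : ∀ k : ℕ, (L k : ℝ) = goldenRatio ^ k + goldenConj ^ k := by
    have key : ∀ k : ℕ, (L k : ℝ) = goldenRatio ^ k + goldenConj ^ k ∧
        (L (k + 1) : ℝ) = goldenRatio ^ (k + 1) + goldenConj ^ (k + 1) := by
      intro k
      induction k with
      | zero => simp [hL0, hL1, goldenRatio_add_goldenConj]; norm_num
      | succ k ih =>
        refine ⟨ih.2, ?_⟩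
        have hrec := hLrec (k + 1) (by omega)
        simp only [Nat.add_sub_cancel] at hrec
        rw [hrec]
        push_cast
        rw [ih.1, ih.2]
        have h1 : goldenRatio ^ (k + 2) = goldenRatio ^ (k + 1) + goldenRatio ^ k := by
          have := goldenRatio_sq
          calc goldenRatio ^ (k + 2) = goldenRatio ^ k * goldenRatio ^ 2 := by ring
          _ = goldenRatio ^ k * (goldenRatio + 1) := by rw [this]
          _ = _ := by ring
        have h2 : goldenConj ^ (k + 2) = goldenConj ^ (k + 1) + goldenConj ^ k := by
          have := goldenConj_sq
          calc goldenConj ^ (k + 2) = goldenConj ^ k * goldenConj ^ 2 := by ring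
          _ = goldenConj ^ k * (goldenConj + 1) := by rw [this]
          _ = _ := by ring
        rw [h1, h2]; ring
    exact fun k => (key k).1
  intro m n hm hn hne
  obtain ⟨k, rfl⟩ : ∃ k, m = k + 1 := ⟨m - 1, by omega⟩
  simp only [Nat.add_sub_cancel]
  have hxy : (goldenRatio ^ n) * (goldenConj ^ n) = 1 := by
    rw [← mul_pow, goldenRatio_mul_goldenConj]
    exact hne.neg_one_pow
  have hU := cheb_aux (goldenRatio ^ n) (goldenConj ^ n) hxy k
  rw [Real.coe_fib_eq, Real.coe_fib_eq, hLval]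
  rw [show (goldenRatio : ℝ) ^ (n * (k + 1)) = (goldenRatio ^ n) ^ (k + 1) by
    rw [← pow_mul]]
  rw [show (goldenConj : ℝ) ^ (n * (k + 1)) = (goldenConj ^ n) ^ (k + 1) by
    rw [← pow_mul]]
  rw [← hU]
  ring
end

section
/- For all integers n ≥ 1 and m ≥ 1, F_{2nm} = F_{2n} * ∑_{i=0}^{⌊(m-1)/2⌋} C(m-1-i, i) * L_{2n}^(m-1-2i) * (-1)^i. -/
open Finset

private def T (x : ℤ) (p : ℕ) : ℤ :=
  ∑ i ∈ range (p+1), (Nat.choose (p-i) i : ℤ) * x^(p-2*i) * (-1)^i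

private lemma T_zero (x : ℤ) : T x 0 = 1 := by simp [T]

private lemma T_one (x : ℤ) : T x 1 = x := by
  simp [T, Finset.sum_range_succ]

private lemma T_rec (x : ℤ) (p : ℕ) : T x (p+2) = x * T x (p+1) - T x p := by
  have hA : ∀ i ∈ range (p+2),
      ((Nat.choose (p+2-(i+1)) (i+1) : ℤ) * x^(p+2-2*(i+1)) * (-1)^(i+1))
      = -((Nat.choose (p-i) (i+1) : ℤ) * x^(p-2*i) * (-1)^i)
        - ((Nat.choose (p-i) i : ℤ) * x^(p-2*i) * (-1)^i) := by
    intro i hi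
    have h1 : p+2-(i+1) = p+1-i := by omega
    have h2 : p+2-2*(i+1) = p-2*i := by omega
    have h3 : (Nat.choose (p+1-i) (i+1) : ℤ)
        = Nat.choose (p-i) i + Nat.choose (p-i) (i+1) := by
      rcases le_or_gt i p with h | h
      · rw [show p+1-i = (p-i)+1 from by omega, Nat.choose_succ_succ']
        push_cast; ring
      · rw [show p+1-i = 0 from by omega, show p-i = 0 from by omega,
          Nat.choose_eq_zero_of_lt (show 0 < i+1 by omega),
          Nat.choose_eq_zero_of_lt (show 0 < i by omega)]
        simp
    rw [h1, h2, h3]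
    ring
  have key : T x (p+2)
      = (∑ i ∈ range (p+2),
          (-((Nat.choose (p-i) (i+1) : ℤ) * x^(p-2*i) * (-1)^i)
           - ((Nat.choose (p-i) i : ℤ) * x^(p-2*i) * (-1)^i))) + x^(p+2) := by
    unfold T
    rw [show p+2+1 = (p+2)+1 from rfl, Finset.sum_range_succ', Finset.sum_congr rfl hA]
    simp
  have hBsum : ∑ i ∈ range (p+2), ((Nat.choose (p-i) i : ℤ) * x^(p-2*i) * (-1)^i)
      = T x p := by
    unfold T
    rw [Finset.sum_range_succ, Nat.choose_eq_zero_of_lt (show p-(p+1) < p+1 by omega)]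
    simp
  have hAsum : ∑ i ∈ range (p+2), ((Nat.choose (p-i) (i+1) : ℤ) * x^(p-2*i) * (-1)^i)
      = ∑ i ∈ range (p+1), ((Nat.choose (p-i) (i+1) : ℤ) * x^(p-2*i) * (-1)^i) := by
    rw [Finset.sum_range_succ, Nat.choose_eq_zero_of_lt (show p-(p+1) < p+1+1 by omega)]
    simp
  have hx : x * T x (p+1)
      = x^(p+2) - ∑ i ∈ range (p+1), ((Nat.choose (p-i) (i+1) : ℤ) * x^(p-2*i) * (-1)^i) := by
    unfold T
    rw [Finset.mul_sum, Finset.sum_range_succ']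
    have hterm : ∀ i ∈ range (p+1),
        x * ((Nat.choose (p+1-(i+1)) (i+1) : ℤ) * x^(p+1-2*(i+1)) * (-1)^(i+1))
        = -((Nat.choose (p-i) (i+1) : ℤ) * x^(p-2*i) * (-1)^i) := by
      intro i hi
      have h1 : p+1-(i+1) = p-i := by omega
      rcases le_or_gt (2*i+1) p with h | h
      · rw [h1, show p-2*i = (p+1-2*(i+1)) + 1 from by omega, pow_succ]
        ring
      · rw [h1, Nat.choose_eq_zero_of_lt (show p-i < i+1 by omega)]
        push_cast; ring
    rw [Finset.sum_congr rfl hterm]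
    simp [pow_succ]
    ring
  rw [key, Finset.sum_sub_distrib, hBsum, Finset.sum_neg_distrib, hAsum, hx]
  ring

private lemma cassini : ∀ k : ℕ,
    (Nat.fib (k+2) : ℤ) * Nat.fib k - (Nat.fib (k+1))^2 = (-1)^(k+1) := by
  intro k
  induction k with
  | zero => simp
  | succ k ih =>
    have h1 : (Nat.fib (k+3) : ℤ) = Nat.fib (k+2) + Nat.fib (k+1) := by
      rw [show k+3 = (k+1)+2 from rfl, Nat.fib_add_two]; push_cast; ring
    have h2 : (Nat.fib (k+2) : ℤ) = Nat.fib (k+1) + Nat.fib k := by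
      rw [Nat.fib_add_two]; push_cast; ring
    rw [show k+1+2 = k+3 from rfl, show k+1+1 = k+2 from rfl, h1]
    linear_combination -ih - (Nat.fib (k+2) : ℤ) * h2

private lemma fib_double (k : ℕ) :
    Nat.fib (2*k+2) = Nat.fib (k+1) * (Nat.fib k + Nat.fib (k+2)) := by
  have h := Nat.fib_add (k+1) k
  rw [show k+1+k+1 = 2*k+2 from by ring] at h
  rw [h, show k+1+1 = k+2 from rfl]
  ring

private lemma fibB (n : ℕ) (hn : 1 ≤ n) (x : ℕ) :
    (Nat.fib (x + 4*n) : ℤ) + Nat.fib x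
      = ((Nat.fib (2*n+1) : ℤ) + Nat.fib (2*n-1)) * Nat.fib (x + 2*n) := by
  induction x using Nat.twoStepInduction with
  | zero =>
    have h := fib_double (2*n-1)
    rw [show 2*(2*n-1)+2 = 4*n from by omega, show 2*n-1+1 = 2*n from by omega,
      show 2*n-1+2 = 2*n+1 from by omega] at h
    simp only [Nat.zero_add, Nat.fib_zero, h]
    push_cast; ring
  | one =>
    have h := cassini (2*n-1)
    rw [show 2*n-1+2 = 2*n+1 from by omega, show 2*n-1+1 = 2*n from by omega] at h
    have hpow : ((-1 : ℤ))^(2*n) = 1 := by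
      rw [pow_mul]; norm_num
    rw [hpow] at h
    have hodd : (Nat.fib (1 + 4*n) : ℤ) = (Nat.fib (2*n+1))^2 + (Nat.fib (2*n))^2 := by
      have := Nat.fib_add (2*n) (2*n)
      rw [show 2*n+2*n+1 = 1+4*n from by ring] at this
      rw [this]; push_cast; ring
    rw [hodd, show 1+2*n = 2*n+1 from by ring]
    linear_combination -h
  | more x ih1 ih2 =>
    have h1 : (Nat.fib (x+2+4*n) : ℤ) = Nat.fib (x+4*n) + Nat.fib (x+1+4*n) := by
      rw [show x+2+4*n = (x+4*n)+2 from by ring, Nat.fib_add_two,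
        show x+4*n+1 = x+1+4*n from by ring]
      push_cast; ring
    have h2 : (Nat.fib (x+2) : ℤ) = Nat.fib x + Nat.fib (x+1) := by
      rw [Nat.fib_add_two]; push_cast; ring
    have h3 : (Nat.fib (x+2+2*n) : ℤ) = Nat.fib (x+2*n) + Nat.fib (x+1+2*n) := by
      rw [show x+2+2*n = (x+2*n)+2 from by ring, Nat.fib_add_two,
        show x+2*n+1 = x+1+2*n from by ring]
      push_cast; ring
    rw [h1, h2, h3]
    linear_combination ih1 + ih2

theorem stmt_18 (L : ℕ → ℤ) (hL0 : L 0 = 2) (hL1 : L 1 = 1)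
    (hLrec : ∀ k : ℕ, 1 ≤ k → L (k + 1) = L k + L (k - 1)) :
    ∀ n m : ℕ, 1 ≤ n → 1 ≤ m →
      (Nat.fib (2 * n * m) : ℤ) =
        (Nat.fib (2 * n) : ℤ) * ∑ i ∈ Finset.range ((m - 1) / 2 + 1),
          (Nat.choose (m - 1 - i) i : ℤ) * (L (2 * n)) ^ (m - 1 - 2 * i) * (-1) ^ i := by
  have hLA : ∀ k : ℕ, L (k+1) = (Nat.fib (k+2) : ℤ) + Nat.fib k := by
    intro k
    induction k using Nat.twoStepInduction with
    | zero => simp [hL1]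
    | one =>
      have := hLrec 1 le_rfl
      rw [this, hL0, hL1]
      simp [Nat.fib_add_two]
    | more k ih1 ih2 =>
      have hr := hLrec (k+2) (by omega)
      rw [show k+2+1 = k+3 from rfl, show k+2-1 = k+1 from rfl] at hr
      rw [hr, ih1, ih2]
      have e1 : (Nat.fib (k+4) : ℤ) = Nat.fib (k+3) + Nat.fib (k+2) := by
        rw [show k+4 = (k+2)+2 from rfl, Nat.fib_add_two]; push_cast; ring
      have e2 : (Nat.fib (k+2) : ℤ) = Nat.fib (k+1) + Nat.fib k := by
        rw [Nat.fib_add_two]; push_cast; ring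
      rw [e1]
      linear_combination -e2
  intro n m hn hm
  have hL2n : L (2*n) = (Nat.fib (2*n+1) : ℤ) + Nat.fib (2*n-1) := by
    have := hLA (2*n-1)
    rw [show 2*n-1+1 = 2*n from by omega, show 2*n-1+2 = 2*n+1 from by omega] at this
    exact this
  have main : ∀ p : ℕ, (Nat.fib (2*n*(p+1)) : ℤ) = Nat.fib (2*n) * T (L (2*n)) p := by
    intro p
    induction p using Nat.twoStepInduction with
    | zero => rw [T_zero, mul_one, Nat.mul_one]
    | one =>
      rw [T_one, hL2n]
      have h := fibB n hn 0
      simp only [Nat.zero_add, Nat.fib_zero] at h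
      rw [show 2*n*2 = 4*n from by ring]
      push_cast at h ⊢
      linear_combination h
    | more p ih1 ih2 =>
      have h := fibB n hn (2*n*(p+1))
      rw [show 2*n*(p+1)+4*n = 2*n*(p+2+1) from by ring,
        show 2*n*(p+1)+2*n = 2*n*(p+1+1) from by ring, ← hL2n] at h
      rw [T_rec]
      linear_combination h + L (2*n) * ih2 - ih1
  obtain ⟨p, rfl⟩ : ∃ p, m = p + 1 := ⟨m - 1, by omega⟩
  have hsum : ∑ i ∈ Finset.range ((p+1-1)/2+1),
      (Nat.choose (p+1-1-i) i : ℤ) * (L (2*n)) ^ (p+1-1-2*i) * (-1)^i = T (L (2*n)) p := by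
    simp only [Nat.add_sub_cancel]
    unfold T
    refine Finset.sum_subset (Finset.range_subset_range.mpr (by omega)) ?_
    intro i hi hni
    simp only [Finset.mem_range] at hi hni
    rw [Nat.choose_eq_zero_of_lt (show p - i < i by omega)]
    simp
  rw [hsum]
  exact main p
end
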